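/- For all k ≥ 1 and h ≥ 3, π'(T_{k,h}) ≤ ⌈(h+1)k/2⌉. -/

import Mathlib

/-!
Colour the tree edge in position `p` (its `edgeIdx`) by `p % n`, with `n = ⌈(h+1)k/2⌉`.
A path in the tree climbs to its top vertex and then descends, so the positions `z i` of its
edges first decrease strictly and then increase strictly, in steps of at most `k`, and they lie
in `[1, kh]` with `kh ≤ 2n - k`. If the colour word were a square `ww` with `|w| = m`, every
difference `z (t + m) - z t` would be `0` or `±n`. For `h ≥ 4` we have `n > 2k`, so this
difference cannot change with `t`: the value `0` contradicts the valley shape, and `±n` pushes a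
position beyond `kh`. For `h = 3` (so `n = 2k`) a path has at most six edges and the few possible
shapes are checked directly.
-/

/-- A repetition: a nonempty sequence whose first half equals its second half. -/
def IsRepetition {α : Type*} (l : List α) : Prop := ∃ w : List α, w ≠ [] ∧ l = w ++ w

/-- An edge-coloring is nonrepetitive if no path carries a repetitive color sequence. -/
def NonrepEdgeColoring {V α : Type*} (G : SimpleGraph V) (c : Sym2 V → α) : Prop :=
  ∀ u v : V, ∀ p : G.Walk u v, p.IsPath → ¬ IsRepetition (p.edges.map c)

/-- The Thue chromatic index: minimum number of colors in a nonrepetitive edge-coloring. -/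
noncomputable def thueIdx {V : Type*} (G : SimpleGraph V) : ℕ :=
  sInf {n | ∃ c : Sym2 V → ℕ, (∀ e ∈ G.edgeSet, c e < n) ∧ NonrepEdgeColoring G c}

/-- The infinite `k`-ary tree: vertices are finite words over `Fin k` (the root is `[]`,
and the children of `v`, in left-to-right order, are `j :: v` for `j : Fin k`). -/
def kTree (k : ℕ) : SimpleGraph (List (Fin k)) :=
  SimpleGraph.fromRel (fun u v => ∃ j : Fin k, u = j :: v)

/-- The (1-based) position in the defining sequence of the color of the edge joining a
non-root vertex to its parent: the edges from the root get positions `1, …, k` left to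
right, and if the edge from `v` to its parent has position `i`, then the edges to the
children of `v` get positions `i + 1, …, i + k` left to right. -/
def edgeIdx {k : ℕ} : List (Fin k) → ℕ
  | [] => 0
  | j :: v => edgeIdx v + (j : ℕ) + 1

/-- The edge-coloring of the infinite `k`-ary tree derived from the 1-indexed sequence `S`. -/
def derivedColoring (k : ℕ) (S : ℕ → ℕ) : Sym2 (List (Fin k)) → ℕ :=
  Sym2.lift ⟨fun u v =>
    if v.length < u.length then S (edgeIdx u)
    else if u.length < v.length then S (edgeIdx v) else 0, by
      intro u v
      rcases lt_trichotomy u.length v.length with h | h | h <;>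
        (simp only []; split_ifs <;> first | rfl | omega)⟩

theorem Nat.ModEq.eq_or_add_eq {n a b : ℕ} (hab : a ≡ b [MOD n]) (ha : a < 2 * n)
    (hb : b < 2 * n) : a = b ∨ a + n = b ∨ b + n = a := by
  have hn : 0 < n := by omega
  have hqa : a / n < 2 := (Nat.div_lt_iff_lt_mul hn).2 (by linarith)
  have hqb : b / n < 2 := (Nat.div_lt_iff_lt_mul hn).2 (by linarith)
  have hda := Nat.mod_add_div a n
  have hdb := Nat.mod_add_div b n
  unfold Nat.ModEq at hab
  interval_cases (a / n) <;> interval_cases (b / n) <;> omega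

theorem Nat.add_sub_le_of_lt_succ {f : ℕ → ℕ} {a b : ℕ} (hab : a ≤ b)
    (hf : ∀ i, a ≤ i → i < b → f i < f (i + 1)) : f a + (b - a) ≤ f b := by
  induction b, hab using Nat.le_induction with
  | base => simp
  | succ b hab ih =>
    have := hf b hab (by omega)
    have := ih fun i hai hib => hf i hai (by omega)
    omega

theorem Nat.add_sub_le_of_succ_lt {f : ℕ → ℕ} {a b : ℕ} (hab : a ≤ b)
    (hf : ∀ i, a ≤ i → i < b → f (i + 1) < f i) : f b + (b - a) ≤ f a := by
  induction b, hab using Nat.le_induction with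
  | base => simp
  | succ b hab ih =>
    have := hf b hab (by omega)
    have := ih fun i hai hib => hf i hai (by omega)
    omega

theorem Nat.exists_threshold_of_succ {P : ℕ → Prop} {N : ℕ}
    (hP : ∀ i, i + 1 < N → P i → P (i + 1)) :
    ∃ r ≤ N, (∀ i < r, ¬ P i) ∧ ∀ i, r ≤ i → i < N → P i := by
  classical
  have hex : ∃ r, r = N ∨ r < N ∧ P r := ⟨N, .inl rfl⟩
  have hle : Nat.find hex ≤ N := by rcases Nat.find_spec hex with h | h <;> omega
  refine ⟨Nat.find hex, hle, fun i hi hPi => Nat.find_min hex hi (.inr ⟨by omega, hPi⟩),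
    fun i hri hiN => ?_⟩
  induction i, hri using Nat.le_induction with
  | base => rcases Nat.find_spec hex with h | h <;> [omega; exact h.2]
  | succ i hri ih => exact hP i hiN (ih (by omega))

theorem SimpleGraph.Walk.IsPath.getVert_ne_getVert_add_two {V : Type*} {G : SimpleGraph V}
    {u v : V} {p : G.Walk u v} (hp : p.IsPath) {i : ℕ} (hi : i + 2 ≤ p.length) :
    p.getVert i ≠ p.getVert (i + 2) := fun he =>
  absurd (hp.getVert_injOn (show i ≤ p.length by omega) (show i + 2 ≤ p.length by omega) he)
    (by omega)

theorem SimpleGraph.Walk.exists_getVert_of_isRepetition {V α : Type*} {G : SimpleGraph V}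
    {u v : V} (p : G.Walk u v) (f : Sym2 V → α) (h : IsRepetition (p.edges.map f)) :
    ∃ m, 0 < m ∧ p.length = 2 * m ∧ ∀ t < m,
      f s(p.getVert t, p.getVert (t + 1)) = f s(p.getVert (t + m), p.getVert (t + m + 1)) := by
  obtain ⟨w, hw, he⟩ := h
  have hlen : p.length = 2 * w.length := by
    simpa [two_mul] using congrArg List.length he
  refine ⟨w.length, List.length_pos_iff.2 hw, hlen, fun t ht => ?_⟩
  have key : ∀ i < p.length, (p.edges.map f)[i]? = some (f s(p.getVert i, p.getVert (i + 1))) :=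
    fun i hi => by simp [List.getElem?_eq_getElem (p.length_edges ▸ hi), getElem_edges]
  apply Option.some_injective
  rw [← key t (by omega), ← key (t + w.length) (by omega), he, List.getElem?_append_left ht,
    List.getElem?_append_right (by omega), Nat.add_sub_cancel]

theorem kTree_adj_iff {k : ℕ} {u v : List (Fin k)} :
    (kTree k).Adj u v ↔ (∃ j, u = j :: v) ∨ ∃ j, v = j :: u := by
  rw [kTree, SimpleGraph.fromRel_adj, and_iff_right_iff_imp]
  rintro (⟨j, rfl⟩ | ⟨j, rfl⟩) h <;> simpa using congrArg List.length h

theorem edgeIdx_cons {k : ℕ} (j : Fin k) (v : List (Fin k)) :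
    edgeIdx (j :: v) = edgeIdx v + j + 1 := rfl

theorem length_le_edgeIdx {k : ℕ} : ∀ v : List (Fin k), v.length ≤ edgeIdx v
  | [] => le_rfl
  | j :: v => by
    have := length_le_edgeIdx v
    rw [edgeIdx_cons, List.length_cons]
    omega

theorem edgeIdx_le_mul_length {k : ℕ} : ∀ v : List (Fin k), edgeIdx v ≤ k * v.length
  | [] => le_rfl
  | j :: v => by
    have := edgeIdx_le_mul_length v
    have := j.isLt
    rw [edgeIdx_cons, List.length_cons, mul_add_one]
    omega

theorem derivedColoring_cons {k : ℕ} (S : ℕ → ℕ) (j : Fin k) (v : List (Fin k)) :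
    derivedColoring k S s(j :: v, v) = S (edgeIdx (j :: v)) := by
  simp [derivedColoring]

theorem derivedColoring_lt {k n : ℕ} {S : ℕ → ℕ} (hS : ∀ i, S i < n) (hn : 0 < n)
    (e : Sym2 (List (Fin k))) : derivedColoring k S e < n := by
  induction e with
  | h u v =>
    simp only [derivedColoring, Sym2.lift_mk]
    split_ifs <;> first | exact hS _ | exact hn

/-- The positions `z i` and depths `d i` of the edges `0, …, N - 1` of a path in the `k`-ary
tree of height `h` which climbs towards the root along its first `r` edges and then descends:
the position and depth of an edge are those of its endpoint farther from the root. -/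
structure EdgeProfile (k h r N : ℕ) (z d : ℕ → ℕ) : Prop where
  turn_le : r ≤ N
  one_le_depth : ∀ i < N, 1 ≤ d i
  depth_le : ∀ i < N, d i ≤ h
  depth_le_pos : ∀ i < N, d i ≤ z i
  pos_le : ∀ i < N, z i ≤ k * d i
  up : ∀ i, i + 1 < r → d i = d (i + 1) + 1 ∧ z (i + 1) < z i ∧ z i ≤ z (i + 1) + k
  down : ∀ i, r ≤ i → i + 1 < N →
    d (i + 1) = d i + 1 ∧ z i < z (i + 1) ∧ z (i + 1) ≤ z i + k
  turn : 0 < r → r < N →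
    d r = d (r - 1) ∧ z r ≠ z (r - 1) ∧ z r < z (r - 1) + k ∧ z (r - 1) < z r + k

theorem EdgeProfile.of_cons {k h r N : ℕ} {c : ℕ → List (Fin k)} (hr : r ≤ N)
    (hc : ∀ i < N, c i ≠ [] ∧ (c i).length ≤ h)
    (hup : ∀ i, i + 1 < r → ∃ j, c i = j :: c (i + 1))
    (hdown : ∀ i, r ≤ i → i + 1 < N → ∃ j, c (i + 1) = j :: c i)
    (hturn : 0 < r → r < N → ∃ j j' v, j ≠ j' ∧ c (r - 1) = j :: v ∧ c r = j' :: v) :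
    EdgeProfile k h r N (fun i => edgeIdx (c i)) (fun i => (c i).length) where
  turn_le := hr
  one_le_depth i hi := List.length_pos_iff.2 (hc i hi).1
  depth_le i hi := (hc i hi).2
  depth_le_pos i _ := length_le_edgeIdx (c i)
  pos_le i _ := edgeIdx_le_mul_length (c i)
  up i hi := by
    obtain ⟨j, hj⟩ := hup i hi
    have := j.isLt
    simp only [hj, edgeIdx_cons, List.length_cons, true_and]
    omega
  down i hri hi := by
    obtain ⟨j, hj⟩ := hdown i hri hi
    have := j.isLt
    simp only [hj, edgeIdx_cons, List.length_cons, true_and]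
    omega
  turn hr0 hrN := by
    obtain ⟨j, j', v, hjj', hj, hj'⟩ := hturn hr0 hrN
    have := j.isLt
    have := j'.isLt
    have := Fin.val_ne_of_ne hjj'
    simp only [hj, hj', edgeIdx_cons, List.length_cons, true_and]
    omega

namespace EdgeProfile

variable {k h r m n N : ℕ} {z d : ℕ → ℕ}

theorem one_le_pos (P : EdgeProfile k h r N z d) {i : ℕ} (hi : i < N) : 1 ≤ z i :=
  (P.one_le_depth i hi).trans (P.depth_le_pos i hi)

theorem pos_le_mul (P : EdgeProfile k h r N z d) {i : ℕ} (hi : i < N) : z i ≤ k * h :=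
  (P.pos_le i hi).trans (Nat.mul_le_mul_left k (P.depth_le i hi))

theorem step (P : EdgeProfile k h r N z d) {i : ℕ} (hi : i + 1 < N) :
    z i ≠ z (i + 1) ∧ z i ≤ z (i + 1) + k ∧ z (i + 1) ≤ z i + k := by
  rcases lt_trichotomy (i + 1) r with hir | hir | hir
  · have := P.up i hir
    omega
  · have := P.turn (by omega) (by omega)
    rw [← hir, Nat.add_sub_cancel] at this
    omega
  · have := P.down i (by omega) hi
    omega

theorem pos_lt_of_lt_turn (P : EdgeProfile k h r N z d) {i j : ℕ} (hij : i < j) (hj : j < r) :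
    z j < z i := by
  have := Nat.add_sub_le_of_succ_lt hij.le fun l _ hl => (P.up l (by omega)).2.1
  omega

theorem pos_lt_of_turn_le (P : EdgeProfile k h r N z d) {i j : ℕ} (hi : r ≤ i) (hij : i < j)
    (hj : j < N) : z i < z j := by
  have := Nat.add_sub_le_of_lt_succ hij.le fun l hl _ => (P.down l (by omega) (by omega)).2.1
  omega

theorem lt_turn_le_of_pos_eq (P : EdgeProfile k h r N z d) {i j : ℕ} (hij : i < j) (hj : j < N)
    (he : z i = z j) : i < r ∧ r ≤ j := by
  constructor
  · by_contra! hr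
    exact (P.pos_lt_of_turn_le hr hij hj).ne he
  · by_contra! hr
    exact (P.pos_lt_of_lt_turn hij hr).ne' he

theorem turn_le_height (P : EdgeProfile k h r N z d) : r ≤ h := by
  rcases Nat.eq_zero_or_pos r with hr | hr
  · omega
  have := Nat.add_sub_le_of_succ_lt (f := d) (Nat.zero_le (r - 1))
    fun l _ hl => by have := P.up l (by omega); omega
  have := P.one_le_depth (r - 1) (by have := P.turn_le; omega)
  have := P.depth_le 0 (by have := P.turn_le; omega)
  omega

theorem sub_turn_le_height (P : EdgeProfile k h r N z d) : N - r ≤ h := by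
  rcases Nat.lt_or_ge r N with hr | hr
  · have := Nat.add_sub_le_of_lt_succ (f := d) (Nat.le_sub_one_of_lt hr)
      fun l hl _ => by have := P.down l hl (by omega); omega
    have := P.one_le_depth r hr
    have := P.depth_le (N - 1) (by omega)
    omega
  · omega

theorem not_forall_pos_eq (P : EdgeProfile k h r (2 * m) z d) (hm : 0 < m) :
    ¬ ∀ t < m, z t = z (t + m) := by
  intro hsq
  have h0 : z 0 = z m := by simpa using hsq 0 hm
  rcases Nat.lt_or_ge m 2 with hm1 | hm2
  · have := P.step (i := 0) (by omega)
    rw [show m = 0 + 1 by omega] at h0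
    exact this.1 h0
  · have h1 : z 1 = z (m + 1) := by rw [hsq 1 hm2, add_comm]
    obtain ⟨-, hrm⟩ := P.lt_turn_le_of_pos_eq hm (by omega) h0
    obtain ⟨hr1, -⟩ := P.lt_turn_le_of_pos_eq (i := 1) (j := m + 1) (by omega) (by omega) h1
    have := P.pos_lt_of_lt_turn zero_lt_one hr1
    have := P.pos_lt_of_turn_le hrm (lt_add_one m) (by omega)
    omega

theorem not_forall_pos_add_eq (P : EdgeProfile k h r (2 * m) z d) (hm : 0 < m)
    (hn : k * h + k ≤ 2 * n) : ¬ ∀ t < m, z (t + m) = z t + n := by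
  intro hsq
  have h0 := hsq 0 hm
  have h1 := hsq (m - 1) (by omega)
  have hstep := P.step (i := m - 1) (by omega)
  rw [Nat.sub_add_cancel hm] at hstep
  have := P.one_le_pos (i := 0) (by omega)
  have := P.pos_le_mul (i := m - 1 + m) (by omega)
  simp only [zero_add] at h0
  omega

theorem not_forall_add_pos_eq (P : EdgeProfile k h r (2 * m) z d) (hm : 0 < m)
    (hn : k * h + k ≤ 2 * n) : ¬ ∀ t < m, z t = z (t + m) + n := by
  intro hsq
  have h0 := hsq 0 hm
  have h1 := hsq (m - 1) (by omega)
  have hstep := P.step (i := m - 1) (by omega)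
  rw [Nat.sub_add_cancel hm] at hstep
  have := P.one_le_pos (i := m - 1 + m) (by omega)
  have := P.pos_le_mul (i := 0) (by omega)
  simp only [zero_add] at h0
  omega

theorem arity_pos (P : EdgeProfile k h r (2 * m) z d) (hm : 0 < m) : 0 < k := by
  have := (P.one_le_pos (i := 0) (by omega)).trans (P.pos_le 0 (by omega))
  exact Nat.pos_of_ne_zero fun hk => by simp [hk] at this

theorem pos_eq_or_add_eq_of_modEq (P : EdgeProfile k h r (2 * m) z d) (hn : k * h < 2 * n)
    (hsq : ∀ t < m, z t ≡ z (t + m) [MOD n]) {t : ℕ} (ht : t < m) :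
    z t = z (t + m) ∨ z t + n = z (t + m) ∨ z (t + m) + n = z t :=
  (hsq t ht).eq_or_add_eq ((P.pos_le_mul (by omega)).trans_lt hn)
    ((P.pos_le_mul (by omega)).trans_lt hn)

theorem not_forall_modEq_of_two_mul_lt (P : EdgeProfile k h r (2 * m) z d) (hm : 0 < m)
    (hkn : 2 * k < n) (hn : k * h + k ≤ 2 * n) : ¬ ∀ t < m, z t ≡ z (t + m) [MOD n] := by
  intro hsq
  have hk := P.arity_pos hm
  have tri := fun t (ht : t < m) =>
    P.pos_eq_or_add_eq_of_modEq (by nlinarith) hsq ht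
  -- consecutive differences move by at most `2k < n`, so the difference `z (t + m) - z t`,
  -- which lies in `{-n, 0, n}`, is constant
  have hconst : ∀ t < m, z (t + m) + z 0 = z t + z m := by
    intro t ht
    induction t with
    | zero => rw [zero_add, add_comm]
    | succ t ih =>
      have := ih (by omega)
      have := tri t (by omega)
      have h1 := tri (t + 1) ht
      have := P.step (i := t) (by omega)
      have := P.step (i := t + m) (by omega)
      rw [show t + 1 + m = t + m + 1 by omega] at h1 ⊢
      omega
  rcases tri 0 hm with h0 | h0 | h0 <;> simp only [zero_add] at h0
  · exact P.not_forall_pos_eq hm fun t ht => by have := hconst t ht; omega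
  · exact P.not_forall_pos_add_eq hm hn fun t ht => by have := hconst t ht; omega
  · exact P.not_forall_add_pos_eq hm hn fun t ht => by have := hconst t ht; omega

theorem not_forall_modEq_of_height_three (P : EdgeProfile k 3 r (2 * m) z d) (hm : 0 < m) :
    ¬ ∀ t < m, z t ≡ z (t + m) [MOD 2 * k] := by
  intro hsq
  have hk := P.arity_pos hm
  have tri := fun t (ht : t < m) => P.pos_eq_or_add_eq_of_modEq (by omega) hsq ht
  have := P.turn_le_height
  have := P.sub_turn_le_height
  have : m ≤ 3 := by omega
  have hb := fun i (hi : i < 2 * m) => And.intro (P.one_le_pos hi) (P.pos_le_mul hi)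
  interval_cases m
  · have := P.step (i := 0) (by omega)
    have := tri 0 (by omega)
    omega
  · have := P.up 0
    have := P.up 1
    have := P.down 1
    have := P.down 2
    have := P.turn
    have := P.step (i := 0) (by omega)
    have := P.step (i := 1) (by omega)
    have := P.step (i := 2) (by omega)
    have := tri 0 (by omega)
    have := tri 1 (by omega)
    have := hb 0 (by omega)
    have := hb 1 (by omega)
    have := hb 2 (by omega)
    have := hb 3 (by omega)
    interval_cases r <;> simp only [Nat.reduceAdd, Nat.reduceMul, Nat.reduceSub] at * <;> omega
  · obtain rfl : r = 3 := by omega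
    have := P.up 0 (by omega)
    have := P.up 1 (by omega)
    have := P.turn (by omega) (by omega)
    have := P.down 3 le_rfl (by omega)
    have := P.down 4 (by omega) (by omega)
    have := P.depth_le 0 (by omega)
    have := P.one_le_depth 2 (by omega)
    simp only [Nat.reduceAdd, Nat.reduceSub] at *
    -- the path turns at the root, so its middle edges have positions at most `k`
    -- and their neighbours at most `2k`
    have hd : d 1 = 2 ∧ d 2 = 1 ∧ d 3 = 1 ∧ d 4 = 2 := by omega
    have := P.pos_le 1 (by omega)
    have := P.pos_le 2 (by omega)
    have := P.pos_le 3 (by omega)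
    have := P.pos_le 4 (by omega)
    have := tri 0 (by omega)
    have := tri 1 (by omega)
    have := tri 2 (by omega)
    have := hb 0 (by omega)
    have := hb 5 (by omega)
    simp only [hd.1, hd.2.1, hd.2.2.1, hd.2.2.2, Nat.reduceAdd, mul_one] at *
    omega

end EdgeProfile

theorem exists_turn_of_isPath {k : ℕ} {u v : List (Fin k)} {p : (kTree k).Walk u v}
    (hp : p.IsPath) : ∃ r ≤ p.length,
      (∀ i < r, ∃ j, p.getVert i = j :: p.getVert (i + 1)) ∧
      ∀ i, r ≤ i → i < p.length → ∃ j, p.getVert (i + 1) = j :: p.getVert i := by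
  have hstep : ∀ i < p.length, (∃ j, p.getVert i = j :: p.getVert (i + 1)) ∨
      ∃ j, p.getVert (i + 1) = j :: p.getVert i :=
    fun i hi => kTree_adj_iff.1 (p.adj_getVert_succ hi)
  -- a path cannot step down to a child and straight back up
  have hpersist : ∀ i, i + 1 < p.length → (∃ j, p.getVert (i + 1) = j :: p.getVert i) →
      ∃ j, p.getVert (i + 1 + 1) = j :: p.getVert (i + 1) := by
    rintro i hi ⟨j, hj⟩
    refine (hstep (i + 1) hi).resolve_left ?_
    rintro ⟨j', hj'⟩
    exact hp.getVert_ne_getVert_add_two (by omega) (List.cons_eq_cons.1 (hj.symm.trans hj')).2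
  obtain ⟨r, hr, hup, hdown⟩ := Nat.exists_threshold_of_succ hpersist
  exact ⟨r, hr, fun i hi => (hstep i (by omega)).resolve_right (hup i hi), hdown⟩

theorem exists_edgeProfile_of_isPath {k h : ℕ} (S : ℕ → ℕ) {u v : List (Fin k)}
    {p : (kTree k).Walk u v} (hp : p.IsPath) (hh : ∀ i, (p.getVert i).length ≤ h) :
    ∃ r z d, EdgeProfile k h r p.length z d ∧
      ∀ i < p.length, derivedColoring k S s(p.getVert i, p.getVert (i + 1)) = S (z i) := by
  obtain ⟨r, hr, hup, hdown⟩ := exists_turn_of_isPath hp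
  -- `c i` is the endpoint of edge `i` farther from the root
  set c : ℕ → List (Fin k) := fun i => if i < r then p.getVert i else p.getVert (i + 1)
  have hc_lt : ∀ i < r, c i = p.getVert i := fun i hi => if_pos hi
  have hc_ge : ∀ i, r ≤ i → c i = p.getVert (i + 1) := fun i hi => if_neg (by omega)
  have hedge : ∀ i < p.length,
      ∃ j w, c i = j :: w ∧ s(p.getVert i, p.getVert (i + 1)) = s(j :: w, w) := by
    intro i hi
    rcases Nat.lt_or_ge i r with hir | hir
    · obtain ⟨j, hj⟩ := hup i hir
      exact ⟨j, _, (hc_lt i hir).trans hj, by rw [hj]⟩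
    · obtain ⟨j, hj⟩ := hdown i hir hi
      exact ⟨j, _, (hc_ge i hir).trans hj, by rw [hj, Sym2.eq_swap]⟩
  refine ⟨r, fun i => edgeIdx (c i), fun i => (c i).length,
    EdgeProfile.of_cons hr ?_ ?_ ?_ ?_, ?_⟩
  · intro i hi
    obtain ⟨j, w, hjw, -⟩ := hedge i hi
    refine ⟨hjw ▸ List.cons_ne_nil j w, ?_⟩
    rcases Nat.lt_or_ge i r with hir | hir
    · exact hc_lt i hir ▸ hh i
    · exact hc_ge i hir ▸ hh (i + 1)
  · intro i hi
    rw [hc_lt i (by omega), hc_lt (i + 1) hi]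
    exact hup i (by omega)
  · intro i hri hi
    rw [hc_ge i hri, hc_ge (i + 1) (by omega)]
    exact hdown (i + 1) (by omega) hi
  · intro hr0 hrN
    obtain ⟨j, hj⟩ := hup (r - 1) (by omega)
    obtain ⟨j', hj'⟩ := hdown r le_rfl hrN
    rw [Nat.sub_add_cancel hr0] at hj
    refine ⟨j, j', p.getVert r, fun hjj' => hp.getVert_ne_getVert_add_two (i := r - 1)
      (by omega) ?_, ?_, ?_⟩
    · rw [hj, show r - 1 + 2 = r + 1 by omega, hj', hjj']
    · rw [hc_lt (r - 1) (by omega), hj]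
    · rw [hc_ge r le_rfl, hj']
  · intro i hi
    obtain ⟨j, w, hjw, he⟩ := hedge i hi
    rw [he, derivedColoring_cons, ← hjw]

/-- For all `k ≥ 1` and `h ≥ 3`, the complete `k`-ary tree of height `h` satisfies
`π'(T_{k,h}) ≤ ⌈(h+1)k/2⌉`. -/
theorem stmt19 (k h : ℕ) (hk : 1 ≤ k) (hh : 3 ≤ h) :
    thueIdx ((kTree k).induce {l : List (Fin k) | l.length ≤ h}) ≤
      ((h + 1) * k + 1) / 2 := by
  set n := ((h + 1) * k + 1) / 2
  have hn : 0 < n := by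
    have : 4 ≤ (h + 1) * k := by nlinarith
    omega
  refine Nat.sInf_le ⟨fun e => derivedColoring k (· % n) (Sym2.map Subtype.val e),
    fun e _ => derivedColoring_lt (fun i => Nat.mod_lt i hn) hn _, ?_⟩
  rintro u v p hp hrep
  set q := p.map (SimpleGraph.Embedding.induce _).toHom
  obtain ⟨r, z, d, P, hz⟩ := exists_edgeProfile_of_isPath (h := h) (p := q) (· % n)
    (hp.map Subtype.val_injective) fun i => by
      rw [SimpleGraph.Walk.getVert_map]
      exact (p.getVert i).2
  replace hrep : IsRepetition (q.edges.map (derivedColoring k (· % n))) := by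
    rwa [SimpleGraph.Walk.edges_map, List.map_map]
  obtain ⟨m, hm, hlen, hsq⟩ := q.exists_getVert_of_isRepetition _ hrep
  replace hsq : ∀ t < m, z t ≡ z (t + m) [MOD n] := fun t ht => by
    rw [Nat.ModEq, ← hz t (by omega), ← hz (t + m) (by omega)]
    exact hsq t ht
  rw [hlen] at P
  have hkh : (h + 1) * k = k * h + k := by ring
  rcases hh.eq_or_lt with rfl | hh
  · have h2k : n = 2 * k := by omega
    exact P.not_forall_modEq_of_height_three hm (h2k ▸ hsq)
  · have : 5 * k ≤ (h + 1) * k := Nat.mul_le_mul_right k (by omega)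
    exact P.not_forall_modEq_of_two_mul_lt hm (by omega) (by omega) hsq
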